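/- arXiv:2402.03249 — 3 statements merged into one kernel-verified Lean document; each statement's English description precedes it below -/
import Mathlib

section
/- Let G = (V,E) be a finite simple graph, β > 0, and let X = (X_i)_{i∈V} ∈ {−1,1}^V be distributed according to the Ising measure P(x) ∝ exp(β Σ_{(i,j)∈E} x_i x_j). Then for every edge (i,j) ∈ E, Cov(X_i, X_j) ≥ (1 − e^{−2β})/2. -/
open MeasureTheory ProbabilityTheory Filter Topology Matrix

noncomputable section

/-- The `±1` configuration associated to a boolean configuration. -/
def pmVec {ι : Type*} (s : ι → Bool) : ι → ℝ := fun i => if s i then 1 else -1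

/-- Unnormalized Ising weight `exp((β/2) zᵀ Q z)`. -/
def isingWeight {ι : Type*} [Fintype ι] (β : ℝ) (Q : Matrix ι ι ℝ) (z : ι → ℝ) : ℝ :=
  Real.exp (β / 2 * (z ⬝ᵥ Q.mulVec z))

/-- Ising partition function `Z(β,Q)`. -/
def isingZ (ι : Type*) [Fintype ι] [DecidableEq ι] (β : ℝ) (Q : Matrix ι ι ℝ) : ℝ :=
  ∑ s : ι → Bool, isingWeight β Q (pmVec s)

/-- The Ising probability measure `P_{β,Q}` on `{±1}^ι ⊆ ℝ^ι`:
`P(z) = exp((β/2) zᵀQz) / Z(β,Q)`. -/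
def isingMeasure (ι : Type*) [Fintype ι] [DecidableEq ι] (β : ℝ) (Q : Matrix ι ι ℝ) :
    Measure (ι → ℝ) :=
  ∑ s : ι → Bool,
    ENNReal.ofReal (isingWeight β Q (pmVec s) / isingZ ι β Q) • Measure.dirac (pmVec s)

/-- Covariance of the coordinates `z i` and `z j` under a law `μ` on `ι → ℝ`. -/
def coordCov {ι : Type*} (μ : MeasureTheory.Measure (ι → ℝ)) (i j : ι) : ℝ :=
  (∫ z, z i * z j ∂μ) - (∫ z, z i ∂μ) * (∫ z, z j ∂μ)

/-!
By spin-flip symmetry `E[Xᵢ] = 0`, so the covariance is `E[σ]` with `σ = XᵢXⱼ`. Removing the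
edge `ij` from the adjacency matrix splits the weight as `e^{βσ} w`, where `w` is the Ising weight
of a ferromagnet with nonnegative couplings, and `e^{βσ} = cosh β + σ sinh β` because `σ = ±1`.
Writing `a = Σ w > 0` and `b = Σ σ w`, this gives
`E[σ] = (a sinh β + b cosh β) / (a cosh β + b sinh β)`.
Griffiths' first inequality gives `b ≥ 0`: expanding each factor `e^{c xₚx_q}` (with `c ≥ 0`) as
`cosh c + xₚx_q sinh c` turns `w` into a nonnegative combination of spin monomials, and each
monomial sums to a nonnegative number over `{±1}^V`. Hence `E[σ] ≥ tanh β ≥ (1 - e^{-2β})/2`.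
-/

lemma Real.exp_mul_eq_cosh_add_sinh_mul {a x : ℝ} (hx : x = 1 ∨ x = -1) :
    Real.exp (a * x) = Real.cosh a + Real.sinh a * x := by
  rcases hx with rfl | rfl <;> simp [← Real.cosh_add_sinh]

section

variable {α : Type*} [Fintype α] {σ : α → ℝ}

lemma sum_exp_mul_mul_eq_cosh_mul_add_sinh_mul (hσ : ∀ a, σ a = 1 ∨ σ a = -1) (β : ℝ)
    (w : α → ℝ) :
    ∑ a, Real.exp (β * σ a) * w a
      = Real.cosh β * ∑ a, w a + Real.sinh β * ∑ a, σ a * w a := by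
  simp only [Finset.mul_sum, ← Finset.sum_add_distrib]
  refine Finset.sum_congr rfl fun a _ => ?_
  rw [Real.exp_mul_eq_cosh_add_sinh_mul (hσ a)]
  ring

lemma sum_exp_mul_mul_mul_eq_sinh_mul_add_cosh_mul (hσ : ∀ a, σ a = 1 ∨ σ a = -1) (β : ℝ)
    (w : α → ℝ) :
    ∑ a, Real.exp (β * σ a) * w a * σ a
      = Real.sinh β * ∑ a, w a + Real.cosh β * ∑ a, σ a * w a := by
  simp only [Finset.mul_sum, ← Finset.sum_add_distrib]
  refine Finset.sum_congr rfl fun a _ => ?_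
  rw [Real.exp_mul_eq_cosh_add_sinh_mul (hσ a)]
  rcases hσ a with h | h <;> rw [h] <;> ring

end

lemma Real.tanh_le_sinh_mul_add_cosh_mul_div {β a b : ℝ} (hβ : 0 ≤ β) (ha : 0 < a)
    (hb : 0 ≤ b) :
    Real.tanh β ≤ (Real.sinh β * a + Real.cosh β * b) / (Real.cosh β * a + Real.sinh β * b) := by
  have hsinh : 0 ≤ Real.sinh β := Real.sinh_nonneg_iff.mpr hβ
  have hcosh := Real.cosh_pos β
  rw [Real.tanh_eq_sinh_div_cosh, div_le_div_iff₀ hcosh (by positivity)]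
  -- after cross-multiplying, the difference is `b (cosh² β - sinh² β) = b`
  nlinarith [Real.cosh_sq β]

lemma Real.one_sub_exp_neg_two_mul_div_two_le_tanh {β : ℝ} (hβ : 0 ≤ β) :
    (1 - Real.exp (-2 * β)) / 2 ≤ Real.tanh β := by
  have hprod : Real.exp β * Real.exp (-β) = 1 := by rw [← Real.exp_add]; simp
  have hsq : Real.exp (-2 * β) = Real.exp (-β) ^ 2 := by rw [← Real.exp_nat_mul]; ring_nf
  have hle : Real.exp (-β) ≤ 1 := Real.exp_le_one_iff.mpr (by linarith)
  have hpos := Real.exp_pos (-β)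
  rw [Real.tanh_eq, le_div_iff₀ (by positivity), hsq]
  nlinarith [mul_nonneg hpos.le (sub_nonneg.mpr hle)]

section

variable {V : Type*}

lemma pmVec_eq_one_or_neg_one (s : V → Bool) (v : V) : pmVec s v = 1 ∨ pmVec s v = -1 := by
  unfold pmVec; split <;> simp

lemma pmVec_mul_eq_one_or_neg_one (s : V → Bool) (p q : V) :
    pmVec s p * pmVec s q = 1 ∨ pmVec s p * pmVec s q = -1 := by
  rcases pmVec_eq_one_or_neg_one s p with hp | hp <;>
    rcases pmVec_eq_one_or_neg_one s q with hq | hq <;> simp [hp, hq]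

lemma pmVec_not (s : V → Bool) : pmVec (fun v => !s v) = -pmVec s := by
  funext v; unfold pmVec; cases h : s v <;> simp [h]

lemma SimpleGraph.adjMatrix_sub_single_add_single_nonneg [DecidableEq V] {G : SimpleGraph V}
    [DecidableRel G.Adj] {i j : V} (hij : G.Adj i j) (p q : V) :
    0 ≤ (G.adjMatrix ℝ - (Matrix.single i j 1 + Matrix.single j i 1) : Matrix V V ℝ) p q := by
  simp only [Matrix.sub_apply, Matrix.add_apply, Matrix.single_apply, SimpleGraph.adjMatrix_apply]
  split_ifs <;> grind [hij.ne, hij.symm]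

variable [Fintype V]

lemma isingWeight_eq_prod_exp (β : ℝ) (Q : Matrix V V ℝ) (z : V → ℝ) :
    isingWeight β Q z = ∏ pq : V × V, Real.exp (β / 2 * Q pq.1 pq.2 * (z pq.1 * z pq.2)) := by
  rw [isingWeight, ← Real.exp_sum, Fintype.sum_prod_type]
  congr 1
  simp only [dotProduct, mulVec, Finset.mul_sum]
  refine Finset.sum_congr rfl fun p _ => Finset.sum_congr rfl fun q _ => ?_
  ring

lemma isingWeight_neg (β : ℝ) (Q : Matrix V V ℝ) (z : V → ℝ) :
    isingWeight β Q (-z) = isingWeight β Q z := by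
  simp [isingWeight, mulVec_neg]

lemma isingWeight_pos (β : ℝ) (Q : Matrix V V ℝ) (z : V → ℝ) : 0 < isingWeight β Q z :=
  Real.exp_pos _

variable [DecidableEq V]

lemma isingWeight_add_single_add_single (β : ℝ) (Q : Matrix V V ℝ) (i j : V) (z : V → ℝ) :
    isingWeight β (Q + (Matrix.single i j 1 + Matrix.single j i 1)) z
      = Real.exp (β * (z i * z j)) * isingWeight β Q z := by
  simp only [isingWeight, add_mulVec, dotProduct_add, single_mulVec, ← Real.exp_add]
  congr 1
  simp [dotProduct, Function.update_apply]
  ring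

lemma isingZ_pos (β : ℝ) (Q : Matrix V V ℝ) : 0 < isingZ V β Q :=
  Finset.sum_pos (fun s _ => isingWeight_pos β Q (pmVec s)) Finset.univ_nonempty

lemma sum_prod_pmVec_pow_nonneg (d : V → ℕ) : 0 ≤ ∑ s : V → Bool, ∏ v, pmVec s v ^ d v := by
  unfold pmVec
  rw [← Fintype.prod_sum fun v (b : Bool) => ((if b then 1 else -1 : ℝ)) ^ d v]
  refine Finset.prod_nonneg fun v _ => ?_
  rcases neg_one_pow_eq_or ℝ (d v) with h | h <;> simp [h]

def HasNonnegSpinMoments (f : (V → Bool) → ℝ) : Prop :=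
  ∀ d : V → ℕ, 0 ≤ ∑ s, (∏ v, pmVec s v ^ d v) * f s

lemma hasNonnegSpinMoments_one : HasNonnegSpinMoments (V := V) fun _ => 1 := fun d => by
  simpa using sum_prod_pmVec_pow_nonneg d

namespace HasNonnegSpinMoments

variable {f g : (V → Bool) → ℝ}

lemma sum_nonneg (hf : HasNonnegSpinMoments f) : 0 ≤ ∑ s, f s := by
  simpa using hf 0

lemma add (hf : HasNonnegSpinMoments f) (hg : HasNonnegSpinMoments g) :
    HasNonnegSpinMoments (f + g) := fun d => by
  simpa only [Pi.add_apply, mul_add, Finset.sum_add_distrib] using add_nonneg (hf d) (hg d)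

lemma const_mul (hf : HasNonnegSpinMoments f) {c : ℝ} (hc : 0 ≤ c) :
    HasNonnegSpinMoments fun s => c * f s := fun d => by
  simpa only [mul_left_comm _ c, ← Finset.mul_sum] using mul_nonneg hc (hf d)

lemma pmVec_mul (hf : HasNonnegSpinMoments f) (p : V) :
    HasNonnegSpinMoments fun s => pmVec s p * f s := fun d => by
  have key : ∀ s : V → Bool, (∏ v, pmVec s v ^ d v) * (pmVec s p * f s)
      = (∏ v, pmVec s v ^ (d + Pi.single p 1 : V → ℕ) v) * f s := fun s => by
    simp only [Pi.add_apply, pow_add, Finset.prod_mul_distrib, Pi.single_apply, pow_ite, pow_one,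
      pow_zero, Finset.prod_ite_eq', Finset.mem_univ, if_true]
    ring
  simpa only [key] using hf (d + Pi.single p 1)

lemma exp_mul (hf : HasNonnegSpinMoments f) {a : ℝ} (ha : 0 ≤ a) (p q : V) :
    HasNonnegSpinMoments fun s => Real.exp (a * (pmVec s p * pmVec s q)) * f s := by
  have hexp := fun s =>
    Real.exp_mul_eq_cosh_add_sinh_mul (a := a) (pmVec_mul_eq_one_or_neg_one s p q)
  have hsinh : 0 ≤ Real.sinh a := Real.sinh_nonneg_iff.mpr ha
  have hsum := (hf.const_mul (Real.cosh_pos a).le).add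
    (((hf.pmVec_mul q).pmVec_mul p).const_mul hsinh)
  convert hsum using 2 with s
  simp only [hexp, Pi.add_apply]
  ring

end HasNonnegSpinMoments

lemma hasNonnegSpinMoments_prod_exp {κ : Type*} (P : Finset κ) (a : κ → ℝ)
    (ha : ∀ k ∈ P, 0 ≤ a k) (p q : κ → V) :
    HasNonnegSpinMoments fun s => ∏ k ∈ P, Real.exp (a k * (pmVec s (p k) * pmVec s (q k))) := by
  classical
  induction P using Finset.induction_on with
  | empty => simpa using hasNonnegSpinMoments_one
  | insert k P hk ih =>
    simp only [Finset.prod_insert hk]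
    exact (ih fun l hl => ha l (Finset.mem_insert_of_mem hl)).exp_mul
      (ha k (Finset.mem_insert_self k P)) _ _

/-- Griffiths' first inequality. -/
theorem hasNonnegSpinMoments_isingWeight {β : ℝ} (hβ : 0 ≤ β) {Q : Matrix V V ℝ}
    (hQ : ∀ p q, 0 ≤ Q p q) : HasNonnegSpinMoments fun s => isingWeight β Q (pmVec s) := by
  simp only [isingWeight_eq_prod_exp]
  exact hasNonnegSpinMoments_prod_exp _ _
    (fun pq _ => mul_nonneg (div_nonneg hβ zero_le_two) (hQ _ _)) Prod.fst Prod.snd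

lemma sum_mul_pmVec_eq_zero {g : (V → ℝ) → ℝ} (hg : ∀ z, g (-z) = g z) (k : V) :
    ∑ s, g (pmVec s) * pmVec s k = 0 := by
  let flip : (V → Bool) ≃ (V → Bool) := Equiv.piCongrRight fun _ => Equiv.boolNot
  have hflip : ∑ s, g (pmVec s) * pmVec s k = ∑ s, -(g (pmVec s) * pmVec s k) :=
    Fintype.sum_equiv flip _ _ fun s => by
      rw [show pmVec (flip s) = -pmVec s from pmVec_not s, hg, Pi.neg_apply, mul_neg, neg_neg]
  rwa [Finset.sum_neg_distrib, self_eq_neg] at hflip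

lemma integral_isingMeasure (β : ℝ) (Q : Matrix V V ℝ) (f : (V → ℝ) → ℝ) :
    ∫ z, f z ∂isingMeasure V β Q
      = (∑ s, isingWeight β Q (pmVec s) * f (pmVec s)) / isingZ V β Q := by
  rw [isingMeasure, integral_finsetSum_measure fun s _ =>
    (integrable_dirac enorm_lt_top).smul_measure ENNReal.ofReal_ne_top, Finset.sum_div]
  refine Finset.sum_congr rfl fun s _ => ?_
  rw [integral_smul_measure, integral_dirac, ENNReal.toReal_ofReal
    (div_nonneg (isingWeight_pos β Q _).le (isingZ_pos β Q).le), smul_eq_mul]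
  ring

lemma integral_isingMeasure_apply (β : ℝ) (Q : Matrix V V ℝ) (k : V) :
    ∫ z, z k ∂isingMeasure V β Q = 0 := by
  rw [integral_isingMeasure, sum_mul_pmVec_eq_zero (isingWeight_neg β Q) k, zero_div]

lemma coordCov_isingMeasure (β : ℝ) (Q : Matrix V V ℝ) (i j : V) :
    coordCov (isingMeasure V β Q) i j
      = (∑ s, isingWeight β Q (pmVec s) * (pmVec s i * pmVec s j)) / isingZ V β Q := by
  rw [coordCov, integral_isingMeasure_apply, integral_isingMeasure, zero_mul, sub_zero]

end

/-- **(Edge covariance lower bound).** For the Ising measure on a finite simple graph `G`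
at inverse temperature `β > 0` (i.e. `P(x) ∝ exp(β Σ_{(i,j)∈E} xᵢxⱼ)`, which is `P_{β,A}` for
`A` the adjacency matrix), every edge `(i,j)` satisfies `Cov(Xᵢ, Xⱼ) ≥ (1 - e^{-2β})/2`. -/
theorem ising_edge_covariance_lower_bound {V : Type*} [Fintype V] [DecidableEq V]
    (G : SimpleGraph V) [DecidableRel G.Adj] (β : ℝ) (hβ : 0 < β)
    (i j : V) (hij : G.Adj i j) :
    (1 - Real.exp (-2 * β)) / 2 ≤ coordCov (isingMeasure V β (G.adjMatrix ℝ)) i j := by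
  set Q : Matrix V V ℝ := G.adjMatrix ℝ - (Matrix.single i j 1 + Matrix.single j i 1)
  set w : (V → Bool) → ℝ := fun s => isingWeight β Q (pmVec s)
  set σ : (V → Bool) → ℝ := fun s => pmVec s i * pmVec s j
  have hσ : ∀ s, σ s = 1 ∨ σ s = -1 := fun s => pmVec_mul_eq_one_or_neg_one s i j
  have hw : 0 < ∑ s, w s := isingZ_pos β Q
  have hgriffiths : 0 ≤ ∑ s, σ s * w s := by
    have hQ := SimpleGraph.adjMatrix_sub_single_add_single_nonneg hij
    simpa only [σ, mul_assoc] using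
      (((hasNonnegSpinMoments_isingWeight hβ.le hQ).pmVec_mul j).pmVec_mul i).sum_nonneg
  have hcov : coordCov (isingMeasure V β (G.adjMatrix ℝ)) i j
      = (∑ s, Real.exp (β * σ s) * w s * σ s) / ∑ s, Real.exp (β * σ s) * w s := by
    rw [coordCov_isingMeasure, isingZ, ← sub_add_cancel (G.adjMatrix ℝ)
      (Matrix.single i j 1 + Matrix.single j i 1)]
    simp only [isingWeight_add_single_add_single]
    rfl
  rw [hcov, sum_exp_mul_mul_mul_eq_sinh_mul_add_cosh_mul hσ,
    sum_exp_mul_mul_eq_cosh_mul_add_sinh_mul hσ]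
  exact (Real.one_sub_exp_neg_two_mul_div_two_le_tanh hβ.le).trans
    (Real.tanh_le_sinh_mul_add_cosh_mul_div hβ.le hw hgriffiths)

end
end

section
/- For each n let A_n be an n×n symmetric positive semidefinite matrix with eigenvalues λ_1 ≥ λ_2 ≥ … ≥ λ_n ≥ 0, Tr(A_n) > 0, and λ_1 / Σ_{i=1}^n λ_i → 0 as n → ∞. If Z ~ N(0, I_n), then ZᵀA_nZ / E[ZᵀA_nZ] = ZᵀA_nZ / Tr(A_n) converges to 1 in probability. -/
/-!
By rotation invariance of the standard Gaussian, `Zᵀ (U D Uᵀ) Z` has the law of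
`∑ᵢ λᵢ Zᵢ²`, a sum of independent terms with mean `∑ᵢ λᵢ = Tr A` and variance
`2 ∑ᵢ λᵢ² ≤ 2 λ₁ ∑ᵢ λᵢ`. Chebyshev's inequality then bounds
`P(|ZᵀAZ / Tr A - 1| ≥ ε)` by `2 (λ₁ / ∑ᵢ λᵢ) / ε²`.
-/

open MeasureTheory ProbabilityTheory Filter Topology Matrix

noncomputable section

/-- Sample mean `X̄ = (1/n) Σ_i X_i`. -/
def sampleMean {ι : Type*} [Fintype ι] (x : ι → ℝ) : ℝ := (∑ i, x i) / (Fintype.card ι : ℝ)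

/-- Sample covariance `T_n = (1/n) Σ_i (X_i - X̄)(Y_i - Ȳ)`. -/
def sampleCov {ι : Type*} [Fintype ι] (x y : ι → ℝ) : ℝ :=
  (∑ i, (x i - sampleMean x) * (y i - sampleMean y)) / (Fintype.card ι : ℝ)

/-- Sample correlation `ρₙ`. -/
def sampleCorr {ι : Type*} [Fintype ι] (x y : ι → ℝ) : ℝ :=
  (∑ i, (x i - sampleMean x) * (y i - sampleMean y)) /
    (Real.sqrt (∑ i, (x i - sampleMean x) ^ 2) * Real.sqrt (∑ i, (y i - sampleMean y) ^ 2))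

/-- Convergence in distribution: weak convergence of the laws, tested against
bounded continuous functions. -/
def TendstoInDistribution (μ : ℕ → Measure ℝ) (ν : Measure ℝ) : Prop :=
  ∀ f : BoundedContinuousFunction ℝ ℝ,
    Tendsto (fun n => ∫ x, f x ∂(μ n)) atTop (𝓝 (∫ x, f x ∂ν))

/-- Convergence in probability to a constant, for a sequence of laws on `ℝ`. -/
def TendstoInProbability (μ : ℕ → Measure ℝ) (c : ℝ) : Prop :=
  ∀ ε : ℝ, 0 < ε → Tendsto (fun n => μ n {x | ε ≤ |x - c|}) atTop (𝓝 0)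

/-- `μ` is the centered multivariate Gaussian law `N(0, S)` on `ℝ^n`, characterized à la
Cramér–Wold: every linear functional `⟨a, ·⟩` has law `N(0, aᵀ S a)`. -/
def IsCenteredGaussian {n : ℕ} (μ : Measure (Fin n → ℝ)) (S : Matrix (Fin n) (Fin n) ℝ) : Prop :=
  IsProbabilityMeasure μ ∧
    ∀ a : Fin n → ℝ,
      Measure.map (fun x => ∑ i, a i * x i) μ =
        gaussianReal 0 (Real.toNNReal (a ⬝ᵥ S.mulVec a))

open Real

section GaussianMoments

open Polynomial

lemma deriv_eval_mul_exp_half_sq (p : ℝ[X]) :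
    deriv (fun t => p.eval t * exp (t ^ 2 / 2))
      = fun t => (derivative p + X * p).eval t * exp (t ^ 2 / 2) := by
  funext t
  have he : HasDerivAt (fun t : ℝ => exp (t ^ 2 / 2)) (exp (t ^ 2 / 2) * t) t := by
    simpa using ((hasDerivAt_pow 2 t).div_const 2).exp
  exact ((p.hasDerivAt t).mul he).deriv.trans (by simp; ring)

lemma iteratedDeriv_eval_mul_exp_half_sq (n : ℕ) (p : ℝ[X]) :
    iteratedDeriv n (fun t => p.eval t * exp (t ^ 2 / 2))
      = fun t => ((fun q => derivative q + X * q)^[n] p).eval t * exp (t ^ 2 / 2) := by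
  induction n generalizing p with
  | zero => rfl
  | succ n ih =>
    rw [iteratedDeriv_succ', deriv_eval_mul_exp_half_sq, ih, Function.iterate_succ_apply]

/-- The moments of `N(0, 1)` are the derivatives at `0` of its moment generating function
`exp (t ^ 2 / 2)`. -/
lemma integral_pow_gaussianReal (n : ℕ) :
    ∫ x, x ^ n ∂gaussianReal 0 1 = ((fun q => derivative q + X * q)^[n] 1).eval 0 := by
  have hmgf : mgf (fun x : ℝ => x) (gaussianReal 0 1)
      = fun t => (1 : ℝ[X]).eval t * exp (t ^ 2 / 2) := by
    simp [mgf_fun_id_gaussianReal]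
  have h := iteratedDeriv_mgf_zero (X := fun x : ℝ => x) (μ := gaussianReal 0 1) (by simp) n
  rw [hmgf, iteratedDeriv_eval_mul_exp_half_sq] at h
  simpa using h.symm

lemma integral_sq_gaussianReal : ∫ x, x ^ 2 ∂gaussianReal 0 1 = 1 := by
  simp only [integral_pow_gaussianReal, Function.iterate_succ_apply', Function.iterate_zero_apply]
  simp

lemma integral_pow_four_gaussianReal : ∫ x, x ^ 4 ∂gaussianReal 0 1 = 3 := by
  simp only [integral_pow_gaussianReal, Function.iterate_succ_apply', Function.iterate_zero_apply]
  norm_num [derivative_mul]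

end GaussianMoments

lemma memLp_sq_gaussianReal : MemLp (fun x : ℝ => x ^ 2) 2 (gaussianReal 0 1) := by
  rw [memLp_two_iff_integrable_sq (by fun_prop)]
  simpa [← pow_mul] using integrable_pow_of_mem_interior_integrableExpSet
    (X := fun x : ℝ => x) (μ := gaussianReal 0 1) (by simp) 4

lemma variance_sq_gaussianReal : Var[fun x : ℝ => x ^ 2; gaussianReal 0 1] = 2 := by
  rw [variance_eq_sub memLp_sq_gaussianReal]
  simp only [Pi.pow_apply, ← pow_mul]
  rw [integral_pow_four_gaussianReal, integral_sq_gaussianReal]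
  norm_num

lemma meas_ge_abs_div_integral_sub_one_le {Ω : Type*} [MeasurableSpace Ω] {μ : Measure Ω}
    [IsFiniteMeasure μ] {X : Ω → ℝ} (hX : MemLp X 2 μ) (hm : 0 < μ[X]) {ε : ℝ} (hε : 0 < ε) :
    μ {ω | ε ≤ |X ω / μ[X] - 1|} ≤ ENNReal.ofReal (Var[X; μ] / (ε * μ[X]) ^ 2) := by
  have hset : {ω | ε ≤ |X ω / μ[X] - 1|} = {ω | ε * μ[X] ≤ |X ω - μ[X]|} := by
    ext ω
    rw [Set.mem_ofPred_eq, Set.mem_ofPred_eq, div_sub_one hm.ne', abs_div, abs_of_pos hm,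
      le_div_iff₀ hm]
  rw [hset]
  exact meas_ge_le_variance_div_sq hX (mul_pos hε hm)

lemma Finset.sum_sq_le_mul_sum {ι : Type*} (s : Finset ι) {f : ι → ℝ} {M : ℝ}
    (hf : ∀ i ∈ s, 0 ≤ f i) (hM : ∀ i ∈ s, f i ≤ M) :
    ∑ i ∈ s, f i ^ 2 ≤ M * ∑ i ∈ s, f i := by
  rw [Finset.mul_sum]
  exact Finset.sum_le_sum fun i hi => by
    rw [sq]; exact mul_le_mul_of_nonneg_right (hM i hi) (hf i hi)

section Rotation

variable {ι : Type*} [Fintype ι] [DecidableEq ι]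

lemma trace_conj_diagonal {U : Matrix ι ι ℝ} (hU : Uᵀ * U = 1) (d : ι → ℝ) :
    (U * diagonal d * Uᵀ).trace = ∑ i, d i := by
  rw [trace_mul_comm, ← Matrix.mul_assoc, hU, Matrix.one_mul, trace_diagonal]

lemma dotProduct_mulVec_conj_diagonal (U : Matrix ι ι ℝ) (d z : ι → ℝ) :
    z ⬝ᵥ (U * diagonal d * Uᵀ) *ᵥ z = ∑ i, d i * (Uᵀ *ᵥ z) i ^ 2 := by
  rw [← mulVec_mulVec, ← mulVec_mulVec, dotProduct_mulVec, ← mulVec_transpose]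
  simp only [dotProduct, mulVec_diagonal]
  exact Finset.sum_congr rfl fun i _ => by ring

lemma map_mulVec_pi_gaussianReal {U : Matrix ι ι ℝ} (hU : U ∈ orthogonalGroup ι ℝ) :
    (Measure.pi fun _ : ι => gaussianReal 0 1).map (U *ᵥ ·)
      = Measure.pi fun _ : ι => gaussianReal 0 1 := by
  let e := Unitary.linearIsometryEquiv ⟨toEuclideanCLM (𝕜 := ℝ) U, Unitary.map_mem _ hU⟩
  have h := stdGaussian_map e
  rw [← map_pi_eq_stdGaussian, Measure.map_map (by fun_prop) (by fun_prop)] at h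
  have he : e ∘ WithLp.toLp 2 = WithLp.toLp 2 ∘ (U *ᵥ ·) := rfl
  rw [he, ← Measure.map_map (by fun_prop) (by fun_prop)] at h
  exact (MeasurableEquiv.toLp 2 (ι → ℝ)).map_measurableEquiv_injective h

lemma identDistrib_dotProduct_mulVec_conj_diagonal {U : Matrix ι ι ℝ} (hU : Uᵀ * U = 1)
    (d : ι → ℝ) :
    IdentDistrib (fun z => z ⬝ᵥ (U * diagonal d * Uᵀ) *ᵥ z) (fun z => ∑ i, d i * z i ^ 2)
      (Measure.pi fun _ : ι => gaussianReal 0 1) (Measure.pi fun _ : ι => gaussianReal 0 1) := by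
  have hUt : Uᵀ ∈ orthogonalGroup ι ℝ := by
    rw [mem_orthogonalGroup_iff]
    simpa [star_eq_conjTranspose] using hU
  refine ⟨Measurable.aemeasurable (by fun_prop), Measurable.aemeasurable (by fun_prop), ?_⟩
  simp_rw [dotProduct_mulVec_conj_diagonal]
  change Measure.map ((fun w => ∑ i, d i * w i ^ 2) ∘ (Uᵀ *ᵥ ·)) _ = _
  rw [← Measure.map_map (by fun_prop) (by fun_prop), map_mulVec_pi_gaussianReal hUt]

end Rotation

section WeightedSumOfSquares

variable {ι : Type*} [Fintype ι]

lemma integral_sum_mul_sq_pi_gaussianReal (d : ι → ℝ) :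
    ∫ z, ∑ i, d i * z i ^ 2 ∂(Measure.pi fun _ : ι => gaussianReal 0 1) = ∑ i, d i := by
  rw [integral_finsetSum _ fun i _ => ((integrable_comp_eval (i := i)
    (memLp_sq_gaussianReal.integrable one_le_two)).const_mul (d i))]
  refine Finset.sum_congr rfl fun i _ => ?_
  have h := integral_comp_eval (μ := fun _ : ι => gaussianReal 0 1) (i := i)
    (f := fun x : ℝ => x ^ 2) (by fun_prop)
  rw [integral_const_mul, h, integral_sq_gaussianReal, mul_one]

lemma sum_mul_sq_eq_sum_fn (d : ι → ℝ) :
    (fun z : ι → ℝ => ∑ i, d i * z i ^ 2) = ∑ i, fun z => d i * z i ^ 2 := by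
  ext z; simp

lemma memLp_sum_mul_sq_pi_gaussianReal (d : ι → ℝ) :
    MemLp (fun z => ∑ i, d i * z i ^ 2) 2 (Measure.pi fun _ : ι => gaussianReal 0 1) := by
  rw [sum_mul_sq_eq_sum_fn]
  exact memLp_finsetSum' _ fun i _ =>
    (memLp_sq_gaussianReal.const_mul (d i)).comp_measurePreserving (measurePreserving_eval _ i)

lemma variance_sum_mul_sq_pi_gaussianReal (d : ι → ℝ) :
    Var[fun z => ∑ i, d i * z i ^ 2; Measure.pi fun _ : ι => gaussianReal 0 1]
      = 2 * ∑ i, d i ^ 2 := by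
  rw [sum_mul_sq_eq_sum_fn, variance_sum_pi fun i => memLp_sq_gaussianReal.const_mul (d i)]
  simp only [variance_const_mul, variance_sq_gaussianReal, Finset.mul_sum]
  exact Finset.sum_congr rfl fun i _ => by ring

lemma meas_ge_abs_sum_mul_sq_div_sub_one_le {d : ι → ℝ} {M : ℝ} (hd : ∀ i, 0 ≤ d i)
    (hM : ∀ i, d i ≤ M) (hsum : 0 < ∑ i, d i) {ε : ℝ} (hε : 0 < ε) :
    (Measure.pi fun _ : ι => gaussianReal 0 1) {z | ε ≤ |(∑ i, d i * z i ^ 2) / ∑ i, d i - 1|}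
      ≤ ENNReal.ofReal (2 * (M / ∑ i, d i) / ε ^ 2) := by
  have h := meas_ge_abs_div_integral_sub_one_le (memLp_sum_mul_sq_pi_gaussianReal d)
    ((integral_sum_mul_sq_pi_gaussianReal d).symm ▸ hsum) hε
  rw [integral_sum_mul_sq_pi_gaussianReal, variance_sum_mul_sq_pi_gaussianReal] at h
  refine h.trans (ENNReal.ofReal_le_ofReal ?_)
  calc (2 * ∑ i, d i ^ 2) / (ε * ∑ i, d i) ^ 2
      ≤ 2 * (M * ∑ i, d i) / (ε * ∑ i, d i) ^ 2 := by
        gcongr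
        exact Finset.sum_sq_le_mul_sum _ (fun i _ => hd i) fun i _ => hM i
    _ = 2 * (M / ∑ i, d i) / ε ^ 2 := by field_simp

end WeightedSumOfSquares

theorem gaussian_quadratic_form_concentration_general
    (A : (n : ℕ) → Matrix (Fin (n + 1)) (Fin (n + 1)) ℝ)
    (htr : ∀ n, 0 < Matrix.trace (A n))
    (lam : (n : ℕ) → Fin (n + 1) → ℝ)
    (hdiag : ∀ n, ∃ U : Matrix (Fin (n + 1)) (Fin (n + 1)) ℝ, Uᵀ * U = 1 ∧
      A n = U * Matrix.diagonal (lam n) * Uᵀ)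
    (hmono : ∀ n, ∀ i j : Fin (n + 1), i ≤ j → lam n j ≤ lam n i)
    (hnonneg : ∀ n i, 0 ≤ lam n i)
    (hsmall : Tendsto (fun n => lam n 0 / ∑ i, lam n i) atTop (𝓝 0)) :
    (∀ n, (∫ z : Fin (n + 1) → ℝ, z ⬝ᵥ (A n).mulVec z
        ∂(Measure.pi fun _ : Fin (n + 1) => gaussianReal 0 1)) = Matrix.trace (A n)) ∧
    TendstoInProbability
      (fun n => Measure.map
        (fun z : Fin (n + 1) → ℝ => (z ⬝ᵥ (A n).mulVec z) / Matrix.trace (A n))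
        (Measure.pi fun _ : Fin (n + 1) => gaussianReal 0 1))
      1 := by
  choose U hU hAU using hdiag
  have hlaw n := hAU n ▸ identDistrib_dotProduct_mulVec_conj_diagonal (hU n) (lam n)
  have htrace n : (A n).trace = ∑ i, lam n i := by rw [hAU n, trace_conj_diagonal (hU n)]
  refine ⟨fun n => ?_, fun ε hε => ?_⟩
  · rw [(hlaw n).integral_eq, integral_sum_mul_sq_pi_gaussianReal, htrace]
  have hbound n : Measure.map (fun z => (z ⬝ᵥ (A n) *ᵥ z) / (A n).trace)
      (Measure.pi fun _ => gaussianReal 0 1) {x | ε ≤ |x - 1|}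
      ≤ ENNReal.ofReal (2 * (lam n 0 / ∑ i, lam n i) / ε ^ 2) := by
    have hs : MeasurableSet {x : ℝ | ε ≤ |x - 1|} := measurableSet_le (by fun_prop) (by fun_prop)
    rw [Measure.map_apply (by fun_prop) hs]
    refine (((hlaw n).comp (u := (· / (A n).trace)) (by fun_prop)).measure_mem_eq hs).trans_le ?_
    rw [htrace]
    exact meas_ge_abs_sum_mul_sq_div_sub_one_le (hnonneg n) (fun i => hmono n 0 i (Fin.zero_le i))
      (htrace n ▸ htr n) hε
  refine tendsto_of_tendsto_of_tendsto_of_le_of_le tendsto_const_nhds ?_ (fun n => zero_le) hbound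
  simpa using ENNReal.tendsto_ofReal ((hsmall.const_mul 2).div_const (ε ^ 2))

/-- **(Concentration of Gaussian quadratic forms).** Let `Aₙ` be symmetric positive
semidefinite with eigenvalues `λ₁ ≥ … ≥ λₙ ≥ 0`, `Tr(Aₙ) > 0` and `λ₁/Σᵢλᵢ → 0`. If
`Z ~ N(0, Iₙ)`, then `E[ZᵀAₙZ] = Tr(Aₙ)` and `ZᵀAₙZ / Tr(Aₙ) → 1` in probability.
(The sequence of models has dimension `n + 1`.) -/
theorem gaussian_quadratic_form_concentration
    (A : (n : ℕ) → Matrix (Fin (n + 1)) (Fin (n + 1)) ℝ)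
    (hA : ∀ n, (A n).PosSemidef)
    (htr : ∀ n, 0 < Matrix.trace (A n))
    (lam : (n : ℕ) → Fin (n + 1) → ℝ)
    (hdiag : ∀ n, ∃ U : Matrix (Fin (n + 1)) (Fin (n + 1)) ℝ, Uᵀ * U = 1 ∧
      A n = U * Matrix.diagonal (lam n) * Uᵀ)
    (hmono : ∀ n, ∀ i j : Fin (n + 1), i ≤ j → lam n j ≤ lam n i)
    (hnonneg : ∀ n i, 0 ≤ lam n i)
    (hsmall : Tendsto (fun n => lam n 0 / ∑ i, lam n i) atTop (𝓝 0)) :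
    (∀ n, (∫ z : Fin (n + 1) → ℝ, z ⬝ᵥ (A n).mulVec z
        ∂(Measure.pi fun _ : Fin (n + 1) => gaussianReal 0 1)) = Matrix.trace (A n)) ∧
    TendstoInProbability
      (fun n => Measure.map
        (fun z : Fin (n + 1) → ℝ => (z ⬝ᵥ (A n).mulVec z) / Matrix.trace (A n))
        (Measure.pi fun _ : Fin (n + 1) => gaussianReal 0 1))
      1 :=
  gaussian_quadratic_form_concentration_general A htr lam hdiag hmono hnonneg hsmall

end
end

section
/- For each n let λ_{1,n} ≥ λ_{2,n} ≥ … ≥ λ_{n,n} ≥ 0 be nonnegative reals with λ_{1,n} > 0 and n λ_{2,n}² / λ_{1,n}² → 0 as n → ∞, and let Z ~ N(0, I_n). Then (Σ_{i=1}^n λ_{i,n}² Z_i²) / λ_{1,n}² converges in distribution to the chi-squared distribution χ²_1 with one degree of freedom. -/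
/-!
Realise the Gaussian vectors of all dimensions as initial segments of one i.i.d. standard Gaussian
sequence `Z`. After division by `λ₁²` the statistic is `Z₁² + Rₙ`, where the remainder
`Rₙ = ∑_{i ≥ 2} (λᵢ/λ₁)² Zᵢ²` is nonnegative with mean `∑_{i ≥ 2} (λᵢ/λ₁)² ≤ n λ₂²/λ₁² → 0`.
So `Rₙ → 0` in `L¹`, hence in probability, and `Z₁² + Rₙ` converges in distribution to the law
of `Z₁²`, which is `χ²₁`.
-/

open MeasureTheory ProbabilityTheory Filter Topology Matrix

noncomputable section

/-- The chi-squared distribution with one degree of freedom: the law of the square of a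
standard normal random variable. -/
def chiSqOne : Measure ℝ := Measure.map (fun x : ℝ => x ^ 2) (gaussianReal 0 1)

lemma integral_sq_gaussianReal_zero (v : NNReal) : ∫ x, x ^ 2 ∂gaussianReal 0 v = v := by
  simpa [variance_eq_integral measurable_id'.aemeasurable, integral_id_gaussianReal] using
    variance_fun_id_gaussianReal (μ := 0) (v := v)

lemma integrable_sq_gaussianReal (μ : ℝ) (v : NNReal) :
    Integrable (fun x => x ^ 2) (gaussianReal μ v) :=
  (memLp_id_gaussianReal 2).integrable_sq

section IIDGaussian

variable {ι : Type*} (v : NNReal)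

lemma integrable_sq_eval_infinitePi_gaussianReal (i : ι) :
    Integrable (fun ω : ι → ℝ => ω i ^ 2) (Measure.infinitePi fun _ => gaussianReal 0 v) := by
  have h := integrable_sq_gaussianReal 0 v
  rw [← Measure.infinitePi_map_eval (fun _ : ι => gaussianReal 0 v) i] at h
  exact h.comp_measurable (measurable_pi_apply i)

lemma integral_sq_eval_infinitePi_gaussianReal (i : ι) :
    ∫ ω, ω i ^ 2 ∂(Measure.infinitePi fun _ : ι => gaussianReal 0 v) = v := by
  have h := integral_map (μ := Measure.infinitePi fun _ : ι => gaussianReal 0 v)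
    (φ := fun ω : ι → ℝ => ω i) (f := fun x => x ^ 2) (measurable_pi_apply i).aemeasurable
    (by fun_prop)
  rwa [Measure.infinitePi_map_eval, integral_sq_gaussianReal_zero, eq_comm] at h

lemma integral_sum_mul_sq_infinitePi_gaussianReal {κ : Type*} (s : Finset κ) (e : κ → ι)
    (c : κ → ℝ) :
    ∫ ω, ∑ k ∈ s, c k * ω (e k) ^ 2 ∂(Measure.infinitePi fun _ : ι => gaussianReal 0 v) =
      (∑ k ∈ s, c k) * v := by
  rw [integral_finsetSum _ fun k _ =>
    (integrable_sq_eval_infinitePi_gaussianReal v (e k)).const_mul (c k), Finset.sum_mul]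
  simp_rw [integral_const_mul, integral_sq_eval_infinitePi_gaussianReal]

end IIDGaussian

lemma MeasureTheory.Measure.map_infinitePi_pi_of_inj {ι κ : Type*} [Fintype κ] {X : ι → Type*}
    [∀ i, MeasurableSpace (X i)] (μ : (i : ι) → Measure (X i)) [∀ i, IsProbabilityMeasure (μ i)]
    {e : κ → ι} (he : Function.Injective e) :
    (Measure.infinitePi μ).map (fun ω k => ω (e k)) = Measure.pi fun k => μ (e k) := by
  rw [Measure.map_infinitePi_infinitePi_of_inj he, Measure.infinitePi_eq_pi]

theorem MeasureTheory.tendstoInMeasure_zero_of_tendsto_integral {α ι : Type*} [MeasurableSpace α]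
    {μ : Measure α} {l : Filter ι} {f : ι → α → ℝ} (hf : ∀ i, 0 ≤ᵐ[μ] f i)
    (hint : ∀ i, Integrable (f i) μ) (h : Tendsto (fun i => ∫ a, f i a ∂μ) l (𝓝 0)) :
    TendstoInMeasure μ f l 0 := by
  refine tendstoInMeasure_of_tendsto_eLpNorm one_ne_zero (fun i => (hint i).1)
    aestronglyMeasurable_zero ?_
  have hnorm : ∀ i, eLpNorm (f i) 1 μ = ENNReal.ofReal (∫ a, f i a ∂μ) := fun i => by
    rw [eLpNorm_one_eq_lintegral_enorm,
      ofReal_integral_eq_lintegral_ofReal (hint i) (hf i)]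
    exact lintegral_congr_ae ((hf i).mono fun a ha => Real.enorm_of_nonneg ha)
  simpa [hnorm] using ENNReal.tendsto_ofReal h

lemma MeasureTheory.TendstoInDistribution.tendstoInDistribution_map {Ω : ℕ → Type*} {Ω' : Type*}
    [∀ n, MeasurableSpace (Ω n)] [MeasurableSpace Ω'] {μ : (n : ℕ) → Measure (Ω n)}
    {μ' : Measure Ω'} [∀ n, IsProbabilityMeasure (μ n)] [IsProbabilityMeasure μ']
    {X : (n : ℕ) → Ω n → ℝ} {Z : Ω' → ℝ} (h : MeasureTheory.TendstoInDistribution X atTop Z μ μ') :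
    _root_.TendstoInDistribution (fun n => (μ n).map (X n)) (μ'.map Z) :=
  ProbabilityMeasure.tendsto_iff_forall_integral_tendsto.mp h.tendsto

lemma Fin.sum_sq_mul_sq_div_sq_eq_add {m : ℕ} (a z : Fin (m + 1) → ℝ) (ha : a 0 ≠ 0) :
    (∑ i, a i ^ 2 * z i ^ 2) / a 0 ^ 2 =
      z 0 ^ 2 + ∑ i : Fin m, (a i.succ / a 0) ^ 2 * z i.succ ^ 2 := by
  rw [Fin.sum_univ_succ, add_div, Finset.sum_div]
  congr 1
  · field_simp
  · refine Finset.sum_congr rfl fun i _ => ?_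
    rw [div_pow]; ring

lemma Fin.sum_sq_succ_le_of_antitone {m : ℕ} (a : Fin (m + 2) → ℝ) (ha : Antitone a)
    (h0 : ∀ i, 0 ≤ a i) :
    ∑ i : Fin (m + 1), a i.succ ^ 2 ≤ (m + 1) * a 1 ^ 2 := by
  have := Finset.sum_le_card_nsmul Finset.univ (fun i : Fin (m + 1) => a i.succ ^ 2) (a 1 ^ 2)
    fun i _ => pow_le_pow_left₀ (h0 _) (ha (Fin.one_le_of_ne_zero (Fin.succ_ne_zero i))) 2
  simpa using this

lemma tendsto_sum_sq_succ_div_sq {a : (n : ℕ) → Fin (n + 2) → ℝ} (ha : ∀ n, Antitone (a n))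
    (h0 : ∀ n i, 0 ≤ a n i)
    (h : Tendsto (fun n : ℕ => ((n : ℝ) + 2) * a n 1 ^ 2 / a n 0 ^ 2) atTop (𝓝 0)) :
    Tendsto (fun n => ∑ i : Fin (n + 1), (a n i.succ / a n 0) ^ 2) atTop (𝓝 0) := by
  refine squeeze_zero (fun n => by positivity) (fun n => ?_) h
  calc ∑ i : Fin (n + 1), (a n i.succ / a n 0) ^ 2
      = (∑ i : Fin (n + 1), a n i.succ ^ 2) / a n 0 ^ 2 := by
        simp_rw [div_pow, Finset.sum_div]
    _ ≤ ((n : ℝ) + 1) * a n 1 ^ 2 / a n 0 ^ 2 := by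
        gcongr; exact Fin.sum_sq_succ_le_of_antitone (a n) (ha n) (h0 n)
    _ ≤ ((n : ℝ) + 2) * a n 1 ^ 2 / a n 0 ^ 2 := by
        gcongr; linarith

theorem tendstoInDistribution_sq_add_sum_mul_sq {w : (n : ℕ) → Fin (n + 1) → ℝ}
    (hw : ∀ n i, 0 ≤ w n i) (h : Tendsto (fun n => ∑ i, w n i) atTop (𝓝 0)) :
    TendstoInDistribution
      (fun n => (Measure.pi fun _ : Fin (n + 2) => gaussianReal 0 1).map
        (fun z => z 0 ^ 2 + ∑ i : Fin (n + 1), w n i * z i.succ ^ 2))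
      chiSqOne := by
  set P := Measure.infinitePi fun _ : ℕ => gaussianReal 0 1
  set R : ℕ → (ℕ → ℝ) → ℝ := fun n ω => ∑ i : Fin (n + 1), w n i * ω i.succ ^ 2
  have hR : TendstoInMeasure P R atTop 0 := by
    refine tendstoInMeasure_zero_of_tendsto_integral
      (fun n => ae_of_all _ fun ω => Finset.sum_nonneg fun i _ => mul_nonneg (hw n i) (sq_nonneg _))
      (fun n => integrable_finsetSum _ fun i _ =>
        (integrable_sq_eval_infinitePi_gaussianReal 1 _).const_mul _) ?_
    refine h.congr fun n => ?_
    simpa using (integral_sum_mul_sq_infinitePi_gaussianReal 1 Finset.univ _ (w n)).symm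
  have hconv : MeasureTheory.TendstoInDistribution (fun n ω => ω 0 ^ 2 + R n ω) atTop
      (fun ω => ω 0 ^ 2) (fun _ => P) P :=
    tendstoInDistribution_of_tendstoInMeasure_sub _ _
      (tendstoInDistribution_const ((measurable_pi_apply 0).pow_const 2).aemeasurable)
      (by convert hR using 1; ext n ω; simp) (fun n => by fun_prop)
  have hlaw : ∀ n, (Measure.pi fun _ : Fin (n + 2) => gaussianReal 0 1).map
      (fun z => z 0 ^ 2 + ∑ i : Fin (n + 1), w n i * z i.succ ^ 2) =
        P.map (fun ω => ω 0 ^ 2 + R n ω) := fun n => by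
    rw [← Measure.map_infinitePi_pi_of_inj (fun _ : ℕ => gaussianReal 0 1) Fin.val_injective,
      Measure.map_map (by fun_prop) (by fun_prop)]
    rfl
  have hchi : chiSqOne = P.map (fun ω => ω 0 ^ 2) := by
    rw [chiSqOne, ← Measure.infinitePi_map_eval (fun _ : ℕ => gaussianReal 0 1) 0,
      Measure.map_map (by fun_prop) (by fun_prop)]
    rfl
  simpa [hlaw, hchi] using hconv.tendstoInDistribution_map

/-- **(Weighted sum of squared Gaussians with one dominant weight).** If
`λ₁ₙ ≥ … ≥ λₙₙ ≥ 0`, `λ₁ₙ > 0`, `n λ₂ₙ²/λ₁ₙ² → 0` and `Z ~ N(0, Iₙ)`, then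
`(Σᵢ λᵢₙ² Zᵢ²)/λ₁ₙ² →d χ²₁`. (The sequence of models has dimension `n + 2`.) -/
theorem weighted_squares_chisq_limit
    (lam : (n : ℕ) → Fin (n + 2) → ℝ)
    (hmono : ∀ n, ∀ i j : Fin (n + 2), i ≤ j → lam n j ≤ lam n i)
    (hnonneg : ∀ n i, 0 ≤ lam n i)
    (hpos : ∀ n, 0 < lam n 0)
    (hsmall : Tendsto (fun n : ℕ => ((n : ℝ) + 2) * (lam n 1) ^ 2 / (lam n 0) ^ 2)
      atTop (𝓝 0)) :
    TendstoInDistribution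
      (fun n => Measure.map
        (fun z : Fin (n + 2) → ℝ => (∑ i, (lam n i) ^ 2 * z i ^ 2) / (lam n 0) ^ 2)
        (Measure.pi fun _ : Fin (n + 2) => gaussianReal 0 1))
      chiSqOne := by
  have hsplit : ∀ n, (fun z : Fin (n + 2) → ℝ => (∑ i, lam n i ^ 2 * z i ^ 2) / lam n 0 ^ 2) =
      fun z => z 0 ^ 2 + ∑ i : Fin (n + 1), (lam n i.succ / lam n 0) ^ 2 * z i.succ ^ 2 :=
    fun n => funext fun z => Fin.sum_sq_mul_sq_div_sq_eq_add (lam n) z (hpos n).ne'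
  simp_rw [hsplit]
  exact tendstoInDistribution_sq_add_sum_mul_sq (fun n i => by positivity)
    (tendsto_sum_sq_succ_div_sq (fun n _ _ hij => hmono n _ _ hij) hnonneg hsmall)

end
end
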